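/- With the notation of the geometric setup: if F_1,…,F_s ∈ K[x_1,…,x_n] satisfy rad(I_L) = rad((F_1,…,F_s)), then the total number of L'-homogeneous components of F_1,…,F_s (i.e. q_1 + ⋯ + q_s, where q_i is the number of distinct classes modulo L' of exponent vectors occurring in F_i) is at least δ(D_{L'}^{L})_Ω. -/

import Mathlib

open MvPolynomial

/-- A polynomial is `L`-homogeneous if the difference of any two exponent vectors
occurring in its support lies in `L`. -/
def IsLHomog {n : ℕ} {K : Type*} [CommSemiring K] (L : Set (Fin n → ℤ))
    (F : MvPolynomial (Fin n) K) : Prop :=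
  ∀ u ∈ F.support, ∀ v ∈ F.support, (fun j => ((u j : ℤ) - (v j : ℤ))) ∈ L

/-- An ideal is `L`-homogeneous if it is generated by `L`-homogeneous polynomials. -/
def IsLHomogIdeal {n : ℕ} {K : Type*} [CommSemiring K] (L : Set (Fin n → ℤ))
    (J : Ideal (MvPolynomial (Fin n) K)) : Prop :=
  ∃ S : Set (MvPolynomial (Fin n) K), (∀ F ∈ S, IsLHomog L F) ∧ J = Ideal.span S

/-- The positive part `u⁺` of an integer vector, as an exponent vector. -/
noncomputable def posPart {n : ℕ} (u : Fin n → ℤ) : Fin n →₀ ℕ :=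
  Finsupp.equivFunOnFinite.symm (fun j => (u j).toNat)

/-- The lattice ideal `I_L = ⟨x^{u⁺} - x^{u⁻} : u ∈ L⟩`. -/
noncomputable def latticeIdeal {n : ℕ} (K : Type*) [CommRing K] (L : AddSubgroup (Fin n → ℤ)) :
    Ideal (MvPolynomial (Fin n) K) :=
  Ideal.span {F | ∃ u ∈ L, F = monomial (posPart u) (1 : K) - monomial (posPart (-u)) (1 : K)}

/-- The saturation of a lattice `L ⊆ ℤⁿ`. -/
def satSet {n : ℕ} (L : AddSubgroup (Fin n → ℤ)) : Set (Fin n → ℤ) :=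
  {α | ∃ d : ℤ, d ≠ 0 ∧ d • α ∈ L}

/-- The arithmetical rank of an ideal. -/
noncomputable def ara {R : Type*} [CommSemiring R] (J : Ideal R) : ℕ :=
  sInf {s | ∃ F : Fin s → R, (∀ i, F i ∈ J) ∧ J.radical = (Ideal.span (Set.range F)).radical}

/-- The `L`-homogeneous arithmetical rank of an ideal. -/
noncomputable def araH {n : ℕ} {K : Type*} [CommSemiring K] (L : Set (Fin n → ℤ))
    (J : Ideal (MvPolynomial (Fin n) K)) : ℕ :=
  sInf {s | ∃ F : Fin s → MvPolynomial (Fin n) K, (∀ i, IsLHomog L (F i)) ∧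
    J.radical = (Ideal.span (Set.range F)).radical}

/-- The cone `pos_ℚ(v₁,…,vₙ)` spanned by finitely many vectors of `ℚ^m`. -/
def posQ {n m : ℕ} (v : Fin n → Fin m → ℚ) : Set (Fin m → ℚ) :=
  {x | ∃ d : Fin n → ℚ, (∀ i, 0 ≤ d i) ∧ x = ∑ i, d i • v i}

/-- The subcone `σ(E) = pos_ℚ(rᵢ : i ∈ E)`. -/
def posE {t m : ℕ} (r : Fin t → Fin m → ℚ) (E : Finset (Fin t)) : Set (Fin m → ℚ) :=
  {x | ∃ d : Fin t → ℚ, (∀ i, 0 ≤ d i) ∧ (∀ i ∉ E, d i = 0) ∧ x = ∑ i, d i • r i}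

/-- The relative interior `relint_ℚ(pos_ℚ(rᵢ : i ∈ E))`. -/
def relintE {t m : ℕ} (r : Fin t → Fin m → ℚ) (E : Finset (Fin t)) : Set (Fin m → ℚ) :=
  {x | ∃ d : Fin t → ℚ, (∀ i ∈ E, 0 < d i) ∧ (∀ i ∉ E, d i = 0) ∧ x = ∑ i, d i • r i}

/-- `F` is a face of the cone `σ`: it is cut out by a supporting linear functional. -/
def IsFaceOf {m : ℕ} (σ F : Set (Fin m → ℚ)) : Prop :=
  ∃ c : Fin m → ℚ, (∀ x ∈ σ, 0 ≤ ∑ j, c j * x j) ∧ F = σ ∩ {x | ∑ j, c j * x j = 0}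

/-- The ray spanned by a vector `v`. -/
def rayOf {m : ℕ} (v : Fin m → ℚ) : Set (Fin m → ℚ) := {x | ∃ q : ℚ, 0 ≤ q ∧ x = q • v}

/-- Cast a family of integer vectors to rational vectors. -/
def castQ {n m : ℕ} (a : Fin n → Fin m → ℤ) : Fin n → Fin m → ℚ := fun i j => (a i j : ℚ)

/-- `T` is a face of the simplicial complex `D` (with vertices `𝔼₁,…,𝔼_f`) determined by the
projected cone data `rB`: the relative interiors of the cones `pos_ℚ(rB j : j ∈ 𝔼ᵢ)`, `i ∈ T`,
have a common point. -/
def DFace {t f m : ℕ} (rB : Fin t → Fin m → ℚ) (𝔼 : Fin f → Finset (Fin t))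
    (T : Set (Fin f)) : Prop :=
  (⋂ j ∈ T, relintE rB (𝔼 j)).Nonempty

/-- The cone `cone(N)` of a monomial with exponent vector `u`:
the intersection of all subcones `σ(E)` containing all the `aᵢ` with `i` in the support of `u`. -/
def coneOf {n t m : ℕ} (aQ : Fin n → Fin m → ℚ) (rQ : Fin t → Fin m → ℚ)
    (u : Fin n →₀ ℕ) : Set (Fin m → ℚ) :=
  ⋂ E ∈ {E : Finset (Fin t) | ∀ i ∈ u.support, aQ i ∈ posE rQ E}, posE rQ E

/-- The complement of the `{0,1}`-skeleton of the simplicial complex determined by `rB, 𝔼`: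
two distinct vertices are adjacent iff they are not joined by an edge of the complex. -/
def compSkel {t f m : ℕ} (rB : Fin t → Fin m → ℚ) (𝔼 : Fin f → Finset (Fin t)) :
    SimpleGraph (Fin f) where
  Adj i j := i ≠ j ∧ ¬ DFace rB 𝔼 {i, j}
  symm := by
    constructor
    intro i j h
    exact ⟨h.1.symm, by rw [Set.pair_comm]; exact h.2⟩
  loopless := ⟨fun i h => h.1 rfl⟩

/-- An `Ω`-matching: a finite set of pairwise disjoint nonempty faces of the complex. -/
def IsOmegaMatching {t f m : ℕ} (rB : Fin t → Fin m → ℚ) (𝔼 : Fin f → Finset (Fin t))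
    (M : Finset (Finset (Fin f))) : Prop :=
  (∀ T ∈ M, T.Nonempty ∧ DFace rB 𝔼 (T : Set (Fin f))) ∧
    (M : Set (Finset (Fin f))).Pairwise Disjoint

/-- The support cardinality of a matching. -/
def suppCard {f : ℕ} (M : Finset (Finset (Fin f))) : ℕ := (M.biUnion id).card

/-- `δ(D)_Ω`: the minimum cardinality of a maximal `Ω`-matching. -/
noncomputable def deltaOmega {t f m : ℕ} (rB : Fin t → Fin m → ℚ)
    (𝔼 : Fin f → Finset (Fin t)) : ℕ :=
  sInf {s | ∃ M : Finset (Finset (Fin f)), IsOmegaMatching rB 𝔼 M ∧ M.card = s ∧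
    ∀ M' : Finset (Finset (Fin f)), IsOmegaMatching rB 𝔼 M' → suppCard M' ≤ suppCard M}

/-- The number of `L'`-homogeneous components of a polynomial: the number of distinct classes
modulo `L'` of exponent vectors occurring in its support. -/
noncomputable def numComponents {n : ℕ} {K : Type*} [CommSemiring K]
    (L' : AddSubgroup (Fin n → ℤ)) (F : MvPolynomial (Fin n) K) : ℕ :=
  letI := Classical.decEq ((Fin n → ℤ) ⧸ L')
  (F.support.image (fun u =>
    (QuotientAddGroup.mk (fun j => (u j : ℤ)) : (Fin n → ℤ) ⧸ L'))).card

/-!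
Fix a minimal non-face `C = σ(𝔼ⱼ)` and let `τ` be the set of variables `xₗ` with `aₗ ∈ C`; let
`1_τ` be the point with coordinate `1` on `τ` and `0` elsewhere. For a face `G` of `σ`, a monomial
is nonzero at `1_G` iff its `A`-degree lies in `G`, and both monomials of a binomial of `L` have
the same `A`-degree, so `I_L`, and with it every `Fᵢ`, vanishes at `1_G`. Since `C` is not a face,
a theorem of the alternative (proved via Farkas' lemma) yields `w ∈ L` with `w⁺` using a variable
outside `τ` and `w⁻` none, so the binomial of `w` is `-1` at `1_τ` and some `Fᵢ` does not vanish
there. The monomials of `Fᵢ` with degree in `C` but not in `relint C` have degree in a proper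
subcone, which is a face by minimality; inclusion–exclusion over these faces shows that if every
monomial were of this kind then `Fᵢ(1_τ) = 0`. Hence some monomial of some `Fᵢ` has degree in
`relint σ(𝔼ⱼ)`. Grouping the vertices `𝔼ⱼ` by the `L'`-homogeneous component containing such a
monomial gives an `Ω`-matching covering every vertex: monomials congruent modulo `L'` have the same
image of their degree under `π`, a common point of the projected relative interiors.
-/

open Matrix Finset

theorem exists_nonneg_sum_insert_eq {ι R M : Type*} [DecidableEq ι] [Semiring R] [PartialOrder R]
    [AddCommMonoid M] [Module R M] {s : Finset ι} {k : ι} (hk : k ∉ s)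
    (v : ι → M) {d : ι → R} (hd : ∀ i, 0 ≤ d i) {γ : R} (hγ : 0 ≤ γ) :
    ∃ d' : ι → R, (∀ i, 0 ≤ d' i) ∧
      ∑ i ∈ insert k s, d' i • v i = γ • v k + ∑ i ∈ s, d i • v i := by
  refine ⟨Function.update d k γ, fun i => ?_, ?_⟩
  · rcases eq_or_ne i k with rfl | hi <;> simp [*]
  · rw [sum_insert hk, Function.update_self]
    congr 1
    exact sum_congr rfl fun i hi => by rw [Function.update_of_ne (ne_of_mem_of_not_mem hi hk)]

section Farkas

variable {ι κ 𝕜 : Type*} [Fintype κ] [Field 𝕜] [LinearOrder 𝕜] [IsStrictOrderedRing 𝕜]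

theorem farkas_alternative (s : Finset ι) (v : ι → κ → 𝕜) (b : κ → 𝕜) :
    (∃ d : ι → 𝕜, (∀ i, 0 ≤ d i) ∧ ∑ i ∈ s, d i • v i = b) ∨
      ∃ c : κ → 𝕜, (∀ i ∈ s, 0 ≤ c ⬝ᵥ v i) ∧ c ⬝ᵥ b < 0 := by
  classical
  induction s using Finset.induction_on generalizing v b with
  | empty =>
    by_cases hb : b = 0
    · exact .inl ⟨0, fun _ => le_rfl, by simp [hb]⟩
    · have : 0 < b ⬝ᵥ b := lt_of_le_of_ne (sum_nonneg fun _ _ => mul_self_nonneg _)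
        (Ne.symm (dotProduct_self_eq_zero.not.mpr hb))
      exact .inr ⟨-b, by simp, by simpa [neg_dotProduct]⟩
  | insert k s hk ih =>
    rcases ih v b with ⟨d, hd, hsum⟩ | ⟨c, hc, hcb⟩
    · obtain ⟨d', hd', hsum'⟩ := exists_nonneg_sum_insert_eq hk v hd le_rfl
      exact .inl ⟨d', hd', by rw [hsum', hsum, zero_smul, zero_add]⟩
    by_cases hck : 0 ≤ c ⬝ᵥ v k
    · exact .inr ⟨c, by simpa [hck] using hc, hcb⟩
    set α := c ⬝ᵥ v k
    have hα : α < 0 := not_le.mp hck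
    -- Fourier–Motzkin: eliminate `v k` by projecting along it onto the hyperplane `c ⬝ᵥ x = 0`.
    let proj : (κ → 𝕜) → κ → 𝕜 := fun x => x - (c ⬝ᵥ x / α) • v k
    rcases ih (proj ∘ v) (proj b) with ⟨μ, hμ, hsum⟩ | ⟨d, hd, hdb⟩
    · have hγ : 0 ≤ (c ⬝ᵥ b - ∑ i ∈ s, μ i * c ⬝ᵥ v i) / α := div_nonneg_of_nonpos (by
        linarith [sum_nonneg fun i hi => mul_nonneg (hμ i) (hc i hi)]) hα.le
      obtain ⟨d', hd', hsum'⟩ := exists_nonneg_sum_insert_eq hk v hμ hγ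
      refine .inl ⟨d', hd', ?_⟩
      have : proj b = ∑ i ∈ s, μ i • v i - (∑ i ∈ s, μ i * c ⬝ᵥ v i / α) • v k := by
        rw [← hsum, sum_smul]
        simp only [Function.comp, proj, smul_sub, smul_smul, sum_sub_distrib, mul_div_assoc]
      rw [hsum', sub_div, sub_smul, sum_div]
      linear_combination -this
    · have hproj : ∀ x, (d - (d ⬝ᵥ v k / α) • c) ⬝ᵥ x = d ⬝ᵥ proj x := fun x => by
        simp only [proj, sub_dotProduct, dotProduct_sub, smul_dotProduct, dotProduct_smul,
          smul_eq_mul]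
        ring
      refine .inr ⟨d - (d ⬝ᵥ v k / α) • c, ?_, by rw [hproj]; exact hdb⟩
      simp only [forall_mem_insert, hproj]
      exact ⟨by simp [proj, α, div_self hα.ne], hd⟩

theorem exists_separating_or_exists_relation [Fintype ι] (a : ι → κ → 𝕜) (τ : Finset ι) :
    (∃ c : κ → 𝕜, (∀ l ∈ τ, c ⬝ᵥ a l = 0) ∧ ∀ l ∉ τ, 0 < c ⬝ᵥ a l) ∨
      ∃ w : ι → 𝕜, (∀ l ∉ τ, 0 ≤ w l) ∧ (∃ l ∉ τ, 0 < w l) ∧ ∑ l, w l • a l = 0 := by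
  classical
  by_cases h : ∀ l₀, ∃ c : κ → 𝕜,
      (∀ l ∈ τ, c ⬝ᵥ a l = 0) ∧ (∀ l, 0 ≤ c ⬝ᵥ a l) ∧ (l₀ ∉ τ → 0 < c ⬝ᵥ a l₀)
  · choose c hcτ hc hc₀ using h
    refine .inl ⟨∑ l₀, c l₀, fun l hl => ?_, fun l hl => ?_⟩
    · simp [sum_dotProduct, hcτ _ l hl]
    · rw [sum_dotProduct]
      exact sum_pos' (fun l₀ _ => hc l₀ l) ⟨l, mem_univ _, hc₀ l hl⟩
  obtain ⟨l₀, hl₀⟩ := not_forall.mp h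
  -- Farkas for `-a l₀` against the cone of the `a l` and of the `-a l` with `l ∈ τ`.
  rcases farkas_alternative univ (Sum.elim a fun l => if l ∈ τ then -a l else 0) (-a l₀) with
    ⟨μ, hμ, hsum⟩ | ⟨c, hc, hcb⟩
  · have hl₀τ : l₀ ∉ τ := fun hτ => hl₀ ⟨0, by simp, by simp, fun h => absurd hτ h⟩
    refine .inr ⟨fun l => μ (.inl l) - (if l ∈ τ then μ (.inr l) else 0) + if l = l₀ then 1 else 0,
      fun l hl => ?_, ⟨l₀, hl₀τ, ?_⟩, ?_⟩
    · simpa [hl] using add_nonneg (hμ (.inl l)) (by positivity : (0 : 𝕜) ≤ if l = l₀ then 1 else 0)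
    · simpa [hl₀τ] using add_pos_of_nonneg_of_pos (hμ (.inl l₀)) one_pos
    · rw [Fintype.sum_sum_type] at hsum
      simp only [add_smul, sub_smul, sum_add_distrib, sum_sub_distrib, ite_smul, one_smul,
        zero_smul, sum_ite_eq', mem_univ, if_true]
      simp only [Sum.elim_inl, Sum.elim_inr, smul_ite, smul_neg, smul_zero] at hsum
      simp only [sum_ite_mem, univ_inter, sum_neg_distrib] at hsum ⊢
      linear_combination hsum
  · refine absurd ⟨c, fun l hl => ?_, fun l => ?_, fun _ => ?_⟩ hl₀
    · have h1 := hc (.inl l) (mem_univ _)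
      have h2 := hc (.inr l) (mem_univ _)
      simp only [Sum.elim_inl, Sum.elim_inr, hl, if_true, dotProduct_neg] at h1 h2
      linarith
    · simpa using hc (.inl l) (mem_univ _)
    · simpa using hcb

end Farkas

section Cones

variable {k m : ℕ} {v : Fin k → Fin m → ℚ} {E E' : Finset (Fin k)}

theorem posQ_eq_posE_univ (v : Fin k → Fin m → ℚ) : posQ v = posE v univ := by
  ext x
  simp [posQ, posE]

theorem zero_mem_posE : (0 : Fin m → ℚ) ∈ posE v E :=
  ⟨0, fun _ => le_rfl, fun _ _ => rfl, by simp⟩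

theorem add_mem_posE {x y : Fin m → ℚ} (hx : x ∈ posE v E) (hy : y ∈ posE v E) :
    x + y ∈ posE v E := by
  obtain ⟨d, hd, hdE, rfl⟩ := hx
  obtain ⟨e, he, heE, rfl⟩ := hy
  exact ⟨d + e, fun i => add_nonneg (hd i) (he i), fun i hi => by simp [hdE i hi, heE i hi],
    by simp [add_smul, sum_add_distrib]⟩

theorem smul_mem_posE {x : Fin m → ℚ} {q : ℚ} (hq : 0 ≤ q) (hx : x ∈ posE v E) :
    q • x ∈ posE v E := by
  obtain ⟨d, hd, hdE, rfl⟩ := hx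
  exact ⟨q • d, fun i => mul_nonneg hq (hd i), fun i hi => by simp [hdE i hi],
    by simp [smul_sum, smul_smul]⟩

theorem mem_posE_of_mem {i : Fin k} (hi : i ∈ E) : v i ∈ posE v E :=
  ⟨Pi.single i 1, fun j => by rcases eq_or_ne j i with rfl | h <;> simp [*],
    fun j hj => Pi.single_eq_of_ne (ne_of_mem_of_not_mem hi hj).symm _, by simp [Pi.single_apply]⟩

theorem sum_smul_mem_posE {ι : Type*} [Fintype ι] {d : ι → ℚ} {y : ι → Fin m → ℚ}
    (hd : ∀ i, 0 ≤ d i) (hy : ∀ i, d i ≠ 0 → y i ∈ posE v E) : ∑ i, d i • y i ∈ posE v E := by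
  refine sum_induction _ (· ∈ posE v E) (fun _ _ => add_mem_posE) zero_mem_posE fun i _ => ?_
  rcases eq_or_ne (d i) 0 with h | h
  · simpa [h] using zero_mem_posE
  · exact smul_mem_posE (hd i) (hy i h)

theorem posE_mono (h : E ⊆ E') : posE v E ⊆ posE v E' := fun _ ⟨d, hd, hdE, hx⟩ =>
  ⟨d, hd, fun i hi => hdE i fun hiE => hi (h hiE), hx⟩

theorem exists_ssubset_mem_posE_of_notMem_relintE {x : Fin m → ℚ} (hx : x ∈ posE v E)
    (hrel : x ∉ relintE v E) : ∃ E' ⊂ E, x ∈ posE v E' := by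
  classical
  obtain ⟨d, hd, hdE, rfl⟩ := hx
  refine ⟨E.filter (d · ≠ 0), ssubset_of_subset_of_ne (filter_subset _ _) fun heq => hrel
    ⟨d, fun i hi => lt_of_le_of_ne (hd i) ?_, hdE, rfl⟩, d, hd, fun i hi => ?_, rfl⟩
  · rw [← heq] at hi
    exact Ne.symm (mem_filter.mp hi).2
  · by_contra h
    exact hi (mem_filter.mpr ⟨by_contra fun hiE => h (hdE i hiE), h⟩)

theorem relintE_map {r' : ℕ} (π : (Fin m → ℚ) →ₗ[ℚ] (Fin r' → ℚ)) {x : Fin m → ℚ}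
    (hx : x ∈ relintE v E) : π x ∈ relintE (fun i => π (v i)) E := by
  obtain ⟨d, hd, hdE, rfl⟩ := hx
  exact ⟨d, hd, hdE, by simp [map_sum]⟩

end Cones

section Faces

variable {m : ℕ} {σ G : Set (Fin m → ℚ)}

theorem isFaceOf_iff :
    IsFaceOf σ G ↔ ∃ c : Fin m → ℚ, (∀ x ∈ σ, 0 ≤ c ⬝ᵥ x) ∧ G = σ ∩ {x | c ⬝ᵥ x = 0} :=
  Iff.rfl

theorem IsFaceOf.subset (hG : IsFaceOf σ G) : G ⊆ σ := by
  obtain ⟨c, -, rfl⟩ := hG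
  exact Set.inter_subset_left

theorem IsFaceOf.mem_of_sum_smul_mem (hG : IsFaceOf σ G) {ι : Type*} [Fintype ι] {d : ι → ℚ}
    {y : ι → Fin m → ℚ} (hd : ∀ i, 0 ≤ d i) (hy : ∀ i, y i ∈ σ) (hsum : ∑ i, d i • y i ∈ G)
    {i : ι} (hi : d i ≠ 0) : y i ∈ G := by
  obtain ⟨c, hc, rfl⟩ := isFaceOf_iff.mp hG
  have hzero : ∑ i, d i * c ⬝ᵥ y i = 0 := by simpa [dotProduct_sum] using hsum.2
  have := (sum_eq_zero_iff_of_nonneg fun j _ => mul_nonneg (hd j) (hc _ (hy j))).mp hzero i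
    (mem_univ i)
  exact ⟨hy i, (mul_eq_zero.mp this).resolve_left hi⟩

theorem IsFaceOf.sum_smul_mem {k : ℕ} {v : Fin k → Fin m → ℚ} (hG : IsFaceOf (posQ v) G)
    {ι : Type*} [Fintype ι] {d : ι → ℚ} {y : ι → Fin m → ℚ} (hd : ∀ i, 0 ≤ d i)
    (hy : ∀ i, d i ≠ 0 → y i ∈ G) : ∑ i, d i • y i ∈ G := by
  obtain ⟨c, -, rfl⟩ := isFaceOf_iff.mp hG
  refine ⟨?_, ?_⟩
  · rw [posQ_eq_posE_univ] at hy ⊢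
    exact sum_smul_mem_posE hd fun i hi => (hy i hi).1
  · refine (dotProduct_sum ..).trans (sum_eq_zero fun i _ => ?_)
    rcases eq_or_ne (d i) 0 with h | h
    · simp [h]
    · simp [dotProduct_smul, (hy i h).2.out]

theorem IsFaceOf.inter {G' : Set (Fin m → ℚ)} (hG : IsFaceOf σ G) (hG' : IsFaceOf σ G') :
    IsFaceOf σ (G ∩ G') := by
  obtain ⟨c, hc, rfl⟩ := isFaceOf_iff.mp hG
  obtain ⟨c', hc', rfl⟩ := isFaceOf_iff.mp hG'
  refine isFaceOf_iff.mpr ⟨c + c', fun x hx => ?_, ?_⟩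
  · rw [add_dotProduct]; exact add_nonneg (hc x hx) (hc' x hx)
  · ext x
    simp only [Set.mem_inter_iff, Set.mem_ofPred_eq, add_dotProduct]
    constructor
    · rintro ⟨⟨hx, h⟩, -, h'⟩
      exact ⟨hx, by rw [h, h', add_zero]⟩
    · rintro ⟨hx, h⟩
      have := hc x hx
      have := hc' x hx
      exact ⟨⟨hx, by linarith⟩, hx, by linarith⟩

theorem IsFaceOf.biInter {ι : Type*} {G : ι → Set (Fin m → ℚ)} {s : Finset ι} (hs : s.Nonempty)
    (hG : ∀ i ∈ s, IsFaceOf σ (G i)) : IsFaceOf σ (⋂ i ∈ s, G i) := by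
  classical
  induction hs using Finset.Nonempty.cons_induction with
  | singleton i => simpa using hG i (mem_singleton_self i)
  | cons i s hi hs ih =>
    rw [cons_eq_insert, set_biInter_insert]
    exact (hG i (mem_cons_self i s)).inter (ih fun j hj => hG j (mem_cons_of_mem hj))

end Faces

section Rays

variable {k m : ℕ}

theorem mem_rayOf_self (x : Fin m → ℚ) : x ∈ rayOf x := ⟨1, zero_le_one, (one_smul _ _).symm⟩

theorem rayOf_eq_of_mem {x y : Fin m → ℚ} (hy : y ∈ rayOf x) (hy0 : y ≠ 0) :
    rayOf y = rayOf x := by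
  obtain ⟨q, hq, rfl⟩ := hy
  have hq0 : q ≠ 0 := by rintro rfl; exact hy0 (zero_smul _ _)
  ext z
  constructor
  · rintro ⟨p, hp, rfl⟩
    exact ⟨p * q, mul_nonneg hp hq, by rw [smul_smul]⟩
  · rintro ⟨p, hp, rfl⟩
    exact ⟨p / q, div_nonneg hp hq, by rw [smul_smul, div_mul_cancel₀ _ hq0]⟩

theorem exists_eq_smul_of_isFaceOf_rayOf {v : Fin k → Fin m → ℚ} {x : Fin m → ℚ} (hx : x ≠ 0)
    (hray : IsFaceOf (posQ v) (rayOf x)) : ∃ l, ∃ q : ℚ, 0 < q ∧ v l = q • x := by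
  obtain ⟨d, hd, hxd⟩ := hray.subset (mem_rayOf_self x)
  have hv : ∀ l, v l ∈ posQ v := fun l => by
    rw [posQ_eq_posE_univ]; exact mem_posE_of_mem (mem_univ l)
  by_contra! hno
  refine hx (hxd.trans (sum_eq_zero fun l _ => ?_))
  rcases eq_or_ne (d l) 0 with h | h
  · rw [h, zero_smul]
  · obtain ⟨q, hq, hvl⟩ := hray.mem_of_sum_smul_mem hd hv (hxd ▸ mem_rayOf_self x) h
    obtain rfl : q = 0 := by
      by_contra hq0
      exact hno l q (lt_of_le_of_ne hq (Ne.symm hq0)) hvl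
    rw [hvl, zero_smul, smul_zero]

theorem posE_ne_posE_of_ssubset {t : ℕ} {σ : Set (Fin m → ℚ)} {r : Fin t → Fin m → ℚ}
    (hr0 : ∀ i, r i ≠ 0) (hray : ∀ i, IsFaceOf σ (rayOf (r i)))
    (hinj : ∀ i j, rayOf (r i) = rayOf (r j) → i = j) {E E' : Finset (Fin t)} (h : E' ⊂ E) :
    posE r E' ≠ posE r E := by
  intro heq
  obtain ⟨i, hiE, hiE'⟩ := exists_of_ssubset h
  obtain ⟨d, hd, hdE', hri⟩ := heq ▸ mem_posE_of_mem hiE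
  have hrσ : ∀ k, r k ∈ σ := fun k => (hray k).subset (mem_rayOf_self _)
  refine hr0 i (hri.trans (sum_eq_zero fun k _ => ?_))
  rcases eq_or_ne (d k) 0 with hk | hk
  · rw [hk, zero_smul]
  · have hki := hinj k i <| rayOf_eq_of_mem
      ((hray i).mem_of_sum_smul_mem hd hrσ (hri ▸ mem_rayOf_self _) hk) (hr0 k)
    exact absurd (hdE' k (hki ▸ hiE')) hk

end Rays

section Degree

variable {n m t : ℕ}

/-- The `A`-degree of the monomial `x^u`. -/
def degA (v : Fin n → Fin m → ℚ) (u : Fin n →₀ ℕ) : Fin m → ℚ := ∑ l, (u l : ℚ) • v l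

theorem IsFaceOf.degA_mem_iff {v : Fin n → Fin m → ℚ} {G : Set (Fin m → ℚ)}
    (hG : IsFaceOf (posQ v) G) (u : Fin n →₀ ℕ) :
    degA v u ∈ G ↔ ↑u.support ⊆ {l | v l ∈ G} := by
  have hv : ∀ l, v l ∈ posQ v := fun l => by
    rw [posQ_eq_posE_univ]; exact mem_posE_of_mem (mem_univ l)
  refine ⟨fun h l hl => ?_, fun h => hG.sum_smul_mem (fun _ => Nat.cast_nonneg _) fun l hl => ?_⟩
  · exact hG.mem_of_sum_smul_mem (fun _ => Nat.cast_nonneg _) hv h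
      (Nat.cast_ne_zero.mpr (Finsupp.mem_support_iff.mp hl))
  · exact h (Finsupp.mem_support_iff.mpr (Nat.cast_ne_zero.mp hl))

theorem degA_mem_posE {v : Fin n → Fin m → ℚ} {r : Fin t → Fin m → ℚ} {E : Finset (Fin t)}
    {u : Fin n →₀ ℕ} (h : ↑u.support ⊆ {l | v l ∈ posE r E}) : degA v u ∈ posE r E :=
  sum_smul_mem_posE (fun _ => Nat.cast_nonneg _) fun _ hl =>
    h (Finsupp.mem_support_iff.mpr (Nat.cast_ne_zero.mp hl))

theorem map_degA {r' : ℕ} (π : (Fin m → ℚ) →ₗ[ℚ] (Fin r' → ℚ)) (v : Fin n → Fin m → ℚ)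
    (u : Fin n →₀ ℕ) : π (degA v u) = degA (fun l => π (v l)) u := by
  simp [degA, map_sum]

theorem sum_intCast_smul_castQ (a : Fin n → Fin m → ℤ) (w : Fin n → ℤ) :
    ∑ l, (w l : ℚ) • castQ a l = fun j => ((∑ l, w l • a l) j : ℚ) := by
  ext j
  simp [castQ, Finset.sum_apply]

theorem degA_castQ (a : Fin n → Fin m → ℤ) (u : Fin n →₀ ℕ) :
    degA (castQ a) u = fun j => ((∑ l, (u l : ℤ) • a l) j : ℚ) := by
  rw [← sum_intCast_smul_castQ]
  simp [degA]

end Degree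

section Evaluation

variable {σ K : Type*}

open Classical in
theorem prod_indicator_pow [CommMonoidWithZero K] (τ : Set σ) (u : σ →₀ ℕ) :
    (u.prod fun l e => τ.indicator (1 : σ → K) l ^ e) = if ↑u.support ⊆ τ then 1 else 0 := by
  split_ifs with h
  · exact prod_eq_one fun l hl => by simp [Set.indicator_of_mem (h hl)]
  · obtain ⟨l, hl, hlτ⟩ := Set.not_subset.mp h
    exact prod_eq_zero hl (by simp [Set.indicator_of_notMem hlτ, Finsupp.mem_support_iff.mp hl])

open Classical in
theorem eval_indicator_monomial [CommSemiring K] (τ : Set σ) (u : σ →₀ ℕ) :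
    eval (τ.indicator 1) (monomial u (1 : K)) = if ↑u.support ⊆ τ then 1 else 0 := by
  rw [eval_monomial, one_mul, prod_indicator_pow]

open Classical in
theorem eval_indicator_eq_sum [CommSemiring K] (τ : Set σ) (P : MvPolynomial σ K) :
    eval (τ.indicator 1) P = ∑ u ∈ P.support with ↑u.support ⊆ τ, P.coeff u := by
  rw [eval_eq, sum_filter]
  refine sum_congr rfl fun u _ => ?_
  rw [← Finsupp.prod, prod_indicator_pow, mul_ite, mul_one, mul_zero]

theorem radical_span_le_ker_eval [CommSemiring K] [IsDomain K] (x : σ → K)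
    {S : Set (MvPolynomial σ K)} (hS : ∀ g ∈ S, eval x g = 0) :
    (Ideal.span S).radical ≤ RingHom.ker (eval x) :=
  (Ideal.IsPrime.radical_le_iff (RingHom.ker_isPrime _)).mpr (Ideal.span_le.mpr hS)

theorem eval_indicator_binomial_eq_neg_one [CommRing K] {n : ℕ} (τ : Set (Fin n))
    {z : Fin n → ℤ} {l₀ : Fin n} (hl₀ : l₀ ∉ τ) (hz₀ : 0 < z l₀) (hz : ∀ l ∉ τ, 0 ≤ z l) :
    eval (τ.indicator 1) (monomial (posPart z) (1 : K) - monomial (posPart (-z)) 1) = -1 := by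
  classical
  have hpos : ¬ ↑(posPart z : Fin n →₀ ℕ).support ⊆ τ := fun h =>
    hl₀ (h (Finsupp.mem_support_iff.mpr (by simp [_root_.posPart]; omega)))
  have hneg : ↑(posPart (-z) : Fin n →₀ ℕ).support ⊆ τ := fun l hl => by
    by_contra hlτ
    exact Finsupp.mem_support_iff.mp hl (by simp [_root_.posPart]; exact hz l hlτ)
  rw [map_sub, eval_indicator_monomial, eval_indicator_monomial, if_neg hpos, if_pos hneg,
    zero_sub]

end Evaluation

section ConeRelations

variable {n m t : ℕ} {v : Fin n → Fin m → ℚ} {r : Fin t → Fin m → ℚ} {E : Finset (Fin t)}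

theorem isFaceOf_posE_of_dotProduct {τ : Finset (Fin n)} {c : Fin m → ℚ}
    (hτ : ∀ l ∈ τ, c ⬝ᵥ v l = 0) (hτc : ∀ l ∉ τ, 0 < c ⬝ᵥ v l) :
    IsFaceOf (posQ v) (posE v τ) := by
  have hterm : ∀ d : Fin n → ℚ, (∀ l, 0 ≤ d l) → ∀ l, 0 ≤ d l * c ⬝ᵥ v l := fun d hd l => by
    by_cases hl : l ∈ τ
    · rw [hτ l hl, mul_zero]
    · exact mul_nonneg (hd l) (hτc l hl).le
  refine isFaceOf_iff.mpr ⟨c, ?_, ?_⟩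
  · rintro _ ⟨d, hd, rfl⟩
    simpa [dotProduct_sum, dotProduct_smul] using sum_nonneg fun l _ => hterm d hd l
  · ext x
    simp only [Set.mem_inter_iff, Set.mem_ofPred_eq, posQ_eq_posE_univ]
    constructor
    · rintro ⟨d, hd, hdτ, rfl⟩
      refine ⟨posE_mono (subset_univ τ) ⟨d, hd, hdτ, rfl⟩, ?_⟩
      simp only [dotProduct_sum, dotProduct_smul, smul_eq_mul]
      refine sum_eq_zero fun l _ => ?_
      by_cases hl : l ∈ τ
      · rw [hτ l hl, mul_zero]
      · rw [hdτ l hl, zero_mul]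
    · rintro ⟨⟨d, hd, -, rfl⟩, hzero⟩
      simp only [dotProduct_sum, dotProduct_smul, smul_eq_mul] at hzero
      refine ⟨d, hd, fun l hl => ?_, rfl⟩
      have := (sum_eq_zero_iff_of_nonneg fun l _ => hterm d hd l).mp hzero l (mem_univ l)
      exact (mul_eq_zero.mp this).resolve_right (hτc l hl).ne'

open Classical in
theorem posE_eq_posE_filter (hgen : ∀ i ∈ E, ∃ l, ∃ q : ℚ, 0 < q ∧ v l = q • r i) :
    posE r E = posE v (univ.filter fun l => v l ∈ posE r E) := by
  apply Set.Subset.antisymm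
  · rintro _ ⟨d, hd, hdE, rfl⟩
    refine sum_smul_mem_posE hd fun i hi => ?_
    have hiE : i ∈ E := by_contra fun h => hi (hdE i h)
    obtain ⟨l, q, hq, hl⟩ := hgen i hiE
    have hlE : v l ∈ posE r E := hl ▸ smul_mem_posE hq.le (mem_posE_of_mem hiE)
    rw [show r i = q⁻¹ • v l by rw [hl, smul_smul, inv_mul_cancel₀ hq.ne', one_smul]]
    exact smul_mem_posE (inv_nonneg.mpr hq.le) (mem_posE_of_mem (by simpa using hlE))
  · rintro _ ⟨d, hd, hdτ, rfl⟩
    refine sum_smul_mem_posE hd fun l hl => ?_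
    by_contra h
    exact hl (hdτ l (by simpa using h))

theorem exists_relation_of_not_isFaceOf (hgen : ∀ i ∈ E, ∃ l, ∃ q : ℚ, 0 < q ∧ v l = q • r i)
    (hE : ¬ IsFaceOf (posQ v) (posE r E)) :
    ∃ w : Fin n → ℚ, (∀ l, v l ∉ posE r E → 0 ≤ w l) ∧ (∃ l, v l ∉ posE r E ∧ 0 < w l) ∧
      ∑ l, w l • v l = 0 := by
  classical
  rcases exists_separating_or_exists_relation v (univ.filter fun l => v l ∈ posE r E) with
    ⟨c, hτ, hτc⟩ | ⟨w, hw, ⟨l, hl, hwl⟩, hsum⟩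
  · exact absurd (posE_eq_posE_filter hgen ▸ isFaceOf_posE_of_dotProduct hτ hτc) hE
  · exact ⟨w, fun l hl => hw l (by simpa using hl), ⟨l, by simpa using hl, hwl⟩, hsum⟩

end ConeRelations

open Classical in
theorem sum_filter_exists_eq_zero {ι α G : Type*} [AddCommGroup G] (A : Finset α) (s : Finset ι)
    (p : ι → α → Prop) (f : α → G)
    (h : ∀ t ⊆ s, t.Nonempty → ∑ a ∈ A with ∀ i ∈ t, p i a, f a = 0) :
    ∑ a ∈ A with ∃ i ∈ s, p i a, f a = 0 := by
  have hunion : A.filter (fun a => ∃ i ∈ s, p i a) = s.biUnion fun i => A.filter (p i) := by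
    ext a
    simp only [mem_filter, mem_biUnion]
    tauto
  rw [hunion, inclusion_exclusion_sum_biUnion]
  refine sum_eq_zero fun ⟨t, ht⟩ _ => ?_
  obtain ⟨hts, hne⟩ := mem_filter.mp ht
  have hinter : t.inf' hne (fun i => A.filter (p i)) = A.filter fun a => ∀ i ∈ t, p i a := by
    ext a
    simp only [mem_inf', mem_filter]
    obtain ⟨i₀, hi₀⟩ := hne
    exact ⟨fun h => ⟨(h i₀ hi₀).1, fun i hi => (h i hi).2⟩, fun h i hi => ⟨h.1, h.2 i hi⟩⟩
  rw [hinter, h t (mem_powerset.mp hts) hne, smul_zero]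

theorem eval_indicator_eq_zero_of_forall_degA_notMem_relintE {K : Type*} [CommRing K]
    {n m t : ℕ} {v : Fin n → Fin m → ℚ} {r : Fin t → Fin m → ℚ} {E : Finset (Fin t)}
    (P : MvPolynomial (Fin n) K) (hproper : ∀ E' ⊂ E, IsFaceOf (posQ v) (posE r E'))
    (hvanish : ∀ G, IsFaceOf (posQ v) G → eval ({l | v l ∈ G}.indicator 1) P = 0)
    (hP : ∀ u ∈ P.support, degA v u ∉ relintE r E) :
    eval ({l | v l ∈ posE r E}.indicator 1) P = 0 := by
  classical
  have hcover : ∀ u ∈ P.support, ↑u.support ⊆ {l | v l ∈ posE r E} ↔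
      ∃ E' ∈ E.ssubsets, ↑u.support ⊆ {l | v l ∈ posE r E'} := by
    intro u hu
    constructor
    · intro h
      obtain ⟨E', hE', hx⟩ :=
        exists_ssubset_mem_posE_of_notMem_relintE (degA_mem_posE h) (hP u hu)
      exact ⟨E', mem_ssubsets.mpr hE', ((hproper E' hE').degA_mem_iff u).mp hx⟩
    · rintro ⟨E', hE', h⟩
      exact h.trans fun l hl => posE_mono (mem_ssubsets.mp hE').subset hl
  rw [eval_indicator_eq_sum, filter_congr hcover]
  refine sum_filter_exists_eq_zero _ _ _ _ fun T hT hne => ?_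
  have hG := IsFaceOf.biInter hne fun E' hE' => hproper E' (mem_ssubsets.mp (hT hE'))
  have := hvanish _ hG
  rw [eval_indicator_eq_sum] at this
  convert this using 3 with u
  simp only [Set.subset_def, Set.mem_ofPred_eq, Set.mem_iInter₂]
  exact ⟨fun h x hx E' hE' => h E' hE' x hx, fun h E' hE' x hx => h x hx E' hE'⟩

section LatticeIdeal

variable {K : Type*} [Field K] {n m s : ℕ} {L : AddSubgroup (Fin n → ℤ)} {a : Fin n → Fin m → ℤ}

theorem degA_posPart_eq_degA_posPart_neg
    (hA : ∀ u : Fin n → ℤ, u ∈ satSet L ↔ ∑ i, u i • a i = 0) {u : Fin n → ℤ} (hu : u ∈ L) :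
    degA (castQ a) (posPart u) = degA (castQ a) (posPart (-u)) := by
  have h0 := (hA u).mp ⟨1, one_ne_zero, by rwa [one_smul]⟩
  have hsplit : ∑ l, ((posPart u l : ℕ) : ℤ) • a l - ∑ l, ((posPart (-u) l : ℕ) : ℤ) • a l =
      ∑ l, u l • a l := by
    rw [← sum_sub_distrib]
    refine sum_congr rfl fun l _ => ?_
    rw [← sub_smul]
    simp [_root_.posPart]
  rw [degA_castQ, degA_castQ, sub_eq_zero.mp (hsplit.trans h0)]

theorem radical_latticeIdeal_le_ker_eval_indicator
    (hA : ∀ u : Fin n → ℤ, u ∈ satSet L ↔ ∑ i, u i • a i = 0) {G : Set (Fin m → ℚ)}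
    (hG : IsFaceOf (posQ (castQ a)) G) :
    (latticeIdeal K L).radical ≤ RingHom.ker (eval ({l | castQ a l ∈ G}.indicator 1)) := by
  classical
  refine radical_span_le_ker_eval _ ?_
  rintro _ ⟨u, hu, rfl⟩
  rw [map_sub, eval_indicator_monomial, eval_indicator_monomial, ← hG.degA_mem_iff,
    ← hG.degA_mem_iff, degA_posPart_eq_degA_posPart_neg hA hu, sub_self]

theorem exists_mem_eq_pos_smul_of_relation
    (hA : ∀ u : Fin n → ℤ, u ∈ satSet L ↔ ∑ i, u i • a i = 0) {w : Fin n → ℚ}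
    (hw : ∑ l, w l • castQ a l = 0) : ∃ z ∈ L, ∃ D : ℚ, 0 < D ∧ ∀ l, (z l : ℚ) = D * w l := by
  obtain ⟨b, hb⟩ := IsLocalization.exist_integer_multiples (nonZeroDivisors ℤ) univ w
  choose μ hμ using fun l => hb l (mem_univ l)
  have hμw : ∀ l, (μ l : ℚ) = (b : ℤ) * w l := fun l => by simpa [zsmul_eq_mul] using hμ l
  have hμA : ∑ l, μ l • a l = 0 := by
    have : ∑ l, (μ l : ℚ) • castQ a l = 0 := by
      simp only [hμw, mul_smul, ← smul_sum, hw, smul_zero]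
    rw [sum_intCast_smul_castQ] at this
    ext j
    exact_mod_cast (by simpa using congrFun this j : ((∑ l, μ l • a l) j : ℚ) = 0)
  obtain ⟨e, he, heμ⟩ := (hA μ).mpr hμA
  have hb0 : (b : ℤ) ≠ 0 := nonZeroDivisors.coe_ne_zero b
  refine ⟨(e * b) • e • μ, zsmul_mem heμ _, ((e * b : ℤ) : ℚ) ^ 2, by positivity, fun l => ?_⟩
  simp [hμw]
  ring

theorem exists_mem_support_degA_mem_relintE
    (hA : ∀ u : Fin n → ℤ, u ∈ satSet L ↔ ∑ i, u i • a i = 0) {F : Fin s → MvPolynomial (Fin n) K}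
    (hrad : (latticeIdeal K L).radical = (Ideal.span (Set.range F)).radical) {t : ℕ}
    {r : Fin t → Fin m → ℚ} {E : Finset (Fin t)}
    (hgen : ∀ i ∈ E, ∃ l, ∃ q : ℚ, 0 < q ∧ castQ a l = q • r i)
    (hE : ¬ IsFaceOf (posQ (castQ a)) (posE r E))
    (hproper : ∀ E' ⊂ E, IsFaceOf (posQ (castQ a)) (posE r E')) :
    ∃ i, ∃ u ∈ (F i).support, degA (castQ a) u ∈ relintE r E := by
  set τ : Set (Fin n) := {l | castQ a l ∈ posE r E}
  obtain ⟨w, hw, ⟨l₀, hl₀, hwl₀⟩, hsum⟩ := exists_relation_of_not_isFaceOf hgen hE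
  obtain ⟨z, hz, D, hD, hzw⟩ := exists_mem_eq_pos_smul_of_relation hA hsum
  have hbinom := eval_indicator_binomial_eq_neg_one (K := K) τ hl₀
    (by exact_mod_cast (hzw l₀ ▸ mul_pos hD hwl₀ : (0 : ℚ) < z l₀))
    (fun l hl => by exact_mod_cast (hzw l ▸ mul_nonneg hD.le (hw l hl) : (0 : ℚ) ≤ z l))
  obtain ⟨i, hi⟩ : ∃ i, eval (τ.indicator 1) (F i) ≠ 0 := by
    by_contra! h
    have hker := radical_span_le_ker_eval (τ.indicator 1) (S := Set.range F)
      (by rintro _ ⟨i, rfl⟩; exact h i)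
    rw [← hrad] at hker
    have := hker (Ideal.le_radical (Ideal.subset_span ⟨z, hz, rfl⟩))
    rw [RingHom.mem_ker, hbinom] at this
    exact one_ne_zero (neg_eq_zero.mp this)
  by_contra! hno
  exact hi (eval_indicator_eq_zero_of_forall_degA_notMem_relintE (F i) hproper
    (fun G hG => radical_latticeIdeal_le_ker_eval_indicator hA hG
      (hrad ▸ Ideal.le_radical (Ideal.subset_span ⟨i, rfl⟩))) (hno i))

end LatticeIdeal

theorem deltaOmega_le_card_image {t f m : ℕ} {β : Type*} [DecidableEq β]
    (rB : Fin t → Fin m → ℚ) (𝔼 : Fin f → Finset (Fin t)) {p : Fin f → Fin m → ℚ}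
    (hp : ∀ j, p j ∈ relintE rB (𝔼 j)) (c : Fin f → β) (hc : ∀ j j', c j = c j' → p j = p j') :
    deltaOmega rB 𝔼 ≤ (univ.image c).card := by
  set M := (univ.image c).image fun b => univ.filter (c · = b)
  have hmatch : IsOmegaMatching rB 𝔼 M := by
    refine ⟨?_, ?_⟩
    · simp only [M, mem_image, mem_univ, true_and]
      rintro _ ⟨_, ⟨j₀, rfl⟩, rfl⟩
      refine ⟨⟨j₀, by simp⟩, p j₀, Set.mem_iInter₂.mpr fun j hj => ?_⟩
      exact hc j j₀ (by simpa using hj) ▸ hp j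
    · simp only [M, coe_image, coe_univ, Set.image_univ]
      rintro _ ⟨_, ⟨j, rfl⟩, rfl⟩ _ ⟨_, ⟨j', rfl⟩, rfl⟩ hne
      exact disjoint_filter.mpr fun k _ h h' => hne (by rw [← h, ← h'])
  have hcover : M.biUnion id = univ := eq_univ_of_forall fun j => mem_biUnion.mpr
    ⟨univ.filter (c · = c j), mem_image_of_mem _ (mem_image_of_mem c (mem_univ j)), by simp⟩
  have hmax : ∀ M', IsOmegaMatching rB 𝔼 M' → suppCard M' ≤ suppCard M := fun M' _ => by
    rw [suppCard, suppCard, hcover]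
    exact card_le_univ _
  exact (Nat.sInf_le ⟨M, hmatch, rfl, hmax⟩ : deltaOmega rB 𝔼 ≤ M.card).trans card_image_le

theorem card_image_le_sum_numComponents {K : Type*} [CommSemiring K] {n s f : ℕ}
    (L' : AddSubgroup (Fin n → ℤ)) [DecidableEq ((Fin n → ℤ) ⧸ L')]
    (F : Fin s → MvPolynomial (Fin n) K) (i : Fin f → Fin s) (u : Fin f → Fin n →₀ ℕ)
    (hu : ∀ j, u j ∈ (F (i j)).support) :
    (univ.image fun j => (i j, (QuotientAddGroup.mk fun l => (u j l : ℤ) : (Fin n → ℤ) ⧸ L'))).card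
      ≤ ∑ k, numComponents L' (F k) := by
  set mk : (Fin n →₀ ℕ) → (Fin n → ℤ) ⧸ L' := fun u => QuotientAddGroup.mk fun l => (u l : ℤ)
  calc _ ≤ (univ.biUnion fun k => ((F k).support.image mk).image (Prod.mk k)).card := by
        refine card_le_card fun x hx => ?_
        obtain ⟨j, -, rfl⟩ := mem_image.mp hx
        exact mem_biUnion.mpr ⟨i j, mem_univ _, mem_image_of_mem _ (mem_image_of_mem _ (hu j))⟩
    _ ≤ ∑ k, (((F k).support.image mk).image (Prod.mk k)).card := card_biUnion_le
    _ ≤ ∑ k, numComponents L' (F k) := sum_le_sum fun k _ => card_image_le.trans <| by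
        unfold numComponents
        convert le_rfl

theorem map_degA_eq_of_mk_eq {n m r' : ℕ} {L' : AddSubgroup (Fin n → ℤ)} {a : Fin n → Fin m → ℤ}
    {b : Fin n → Fin r' → ℤ} (hB : ∀ u : Fin n → ℤ, u ∈ satSet L' ↔ ∑ i, u i • b i = 0)
    (π : (Fin m → ℚ) →ₗ[ℚ] (Fin r' → ℚ)) (hπ : ∀ i, π (castQ a i) = castQ b i)
    {u u' : Fin n →₀ ℕ}
    (h : (QuotientAddGroup.mk fun l => (u l : ℤ) : (Fin n → ℤ) ⧸ L') =
      QuotientAddGroup.mk fun l => (u' l : ℤ)) :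
    π (degA (castQ a) u) = π (degA (castQ a) u') := by
  have h0 := (hB ((fun l => (u l : ℤ)) - fun l => (u' l : ℤ))).mp
    ⟨1, one_ne_zero, by rwa [one_smul, ← QuotientAddGroup.eq_iff_sub_mem]⟩
  simp only [Pi.sub_apply, sub_smul, sum_sub_distrib, sub_eq_zero] at h0
  simp only [map_degA, hπ]
  rw [degA_castQ, degA_castQ, h0]

theorem stmt18_general {K : Type*} [Field K] {n m t f r' s : ℕ}
    (L L' : AddSubgroup (Fin n → ℤ))
    (a : Fin n → Fin m → ℤ)
    (hA : ∀ u : Fin n → ℤ, u ∈ satSet L ↔ ∑ i, u i • a i = 0)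
    (b : Fin n → Fin r' → ℤ)
    (hB : ∀ u : Fin n → ℤ, u ∈ satSet L' ↔ ∑ i, u i • b i = 0)
    (rvec : Fin t → Fin m → ℤ)
    (hr0 : ∀ i, castQ rvec i ≠ 0)
    (hray : ∀ i, IsFaceOf (posQ (castQ a)) (rayOf (castQ rvec i)))
    (hrinj : ∀ i j : Fin t, rayOf (castQ rvec i) = rayOf (castQ rvec j) → i = j)
    (𝔼 : Fin f → Finset (Fin t))
    (hE1 : ∀ j : Fin f, ¬ IsFaceOf (posQ (castQ a)) (posE (castQ rvec) (𝔼 j)))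
    (hE2 : ∀ (j : Fin f) (E : Finset (Fin t)),
      ¬ IsFaceOf (posQ (castQ a)) (posE (castQ rvec) E) →
      posE (castQ rvec) E ⊆ posE (castQ rvec) (𝔼 j) →
      posE (castQ rvec) E = posE (castQ rvec) (𝔼 j))
    (π : (Fin m → ℚ) →ₗ[ℚ] (Fin r' → ℚ))
    (hπ : ∀ i, π (castQ a i) = castQ b i)
    (F : Fin s → MvPolynomial (Fin n) K)
    (hrad : (latticeIdeal K L).radical = (Ideal.span (Set.range F)).radical) :
    deltaOmega (fun i => π (castQ rvec i)) 𝔼 ≤ ∑ i, numComponents L' (F i) := by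
  classical
  have hproper : ∀ j, ∀ E ⊂ 𝔼 j, IsFaceOf (posQ (castQ a)) (posE (castQ rvec) E) :=
    fun j E hE => by_contra fun hnf =>
      posE_ne_posE_of_ssubset hr0 hray hrinj hE (hE2 j E hnf (posE_mono hE.subset))
  choose i u hu hrel using fun j => exists_mem_support_degA_mem_relintE hA hrad
    (fun k _ => exists_eq_smul_of_isFaceOf_rayOf (hr0 k) (hray k)) (hE1 j) (hproper j)
  calc deltaOmega _ 𝔼
      ≤ (univ.image fun j => (i j, (QuotientAddGroup.mk fun l => (u j l : ℤ) : _ ⧸ L'))).card :=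
        deltaOmega_le_card_image _ 𝔼 (fun j => relintE_map π (hrel j)) _
          fun j j' h => map_degA_eq_of_mk_eq hB π hπ (congrArg Prod.snd h)
    _ ≤ ∑ k, numComponents L' (F k) := card_image_le_sum_numComponents L' F i u hu

/-- if `F₁,…,Fₛ` generate `rad(I_L)` up to radical, then the total number of
`L'`-homogeneous components of the `Fᵢ` is at least `δ(D_{L'}^L)_Ω`. -/
theorem stmt18 {K : Type*} [Field K] {n m t f r' s : ℕ}
    (L L' : AddSubgroup (Fin n → ℤ))
    (hLpos : ∀ u ∈ L, (∀ i, 0 ≤ u i) → u = (0 : Fin n → ℤ))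
    (hLL' : L ≤ L')
    (a : Fin n → Fin m → ℤ)
    (hA : ∀ u : Fin n → ℤ, u ∈ satSet L ↔ ∑ i, u i • a i = 0)
    (b : Fin n → Fin r' → ℤ)
    (hB : ∀ u : Fin n → ℤ, u ∈ satSet L' ↔ ∑ i, u i • b i = 0)
    (rvec : Fin t → Fin m → ℤ)
    (hr0 : ∀ i, castQ rvec i ≠ 0)
    (hray : ∀ i, IsFaceOf (posQ (castQ a)) (rayOf (castQ rvec i)))
    (hrinj : ∀ i j : Fin t, rayOf (castQ rvec i) = rayOf (castQ rvec j) → i = j)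
    (hspan : posQ (castQ a) = posQ (castQ rvec))
    (𝔼 : Fin f → Finset (Fin t))
    (hE1 : ∀ j : Fin f, ¬ IsFaceOf (posQ (castQ a)) (posE (castQ rvec) (𝔼 j)))
    (hE2 : ∀ (j : Fin f) (E : Finset (Fin t)),
      ¬ IsFaceOf (posQ (castQ a)) (posE (castQ rvec) E) →
      posE (castQ rvec) E ⊆ posE (castQ rvec) (𝔼 j) →
      posE (castQ rvec) E = posE (castQ rvec) (𝔼 j))
    (hE3 : ∀ E : Finset (Fin t), ¬ IsFaceOf (posQ (castQ a)) (posE (castQ rvec) E) →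
      ∃ j : Fin f, posE (castQ rvec) (𝔼 j) ⊆ posE (castQ rvec) E)
    (hEinj : ∀ j k : Fin f, posE (castQ rvec) (𝔼 j) = posE (castQ rvec) (𝔼 k) → j = k)
    (π : (Fin m → ℚ) →ₗ[ℚ] (Fin r' → ℚ))
    (hπ : ∀ i, π (castQ a i) = castQ b i)
    (F : Fin s → MvPolynomial (Fin n) K)
    (hrad : (latticeIdeal K L).radical = (Ideal.span (Set.range F)).radical) :
    deltaOmega (fun i => π (castQ rvec i)) 𝔼 ≤ ∑ i, numComponents L' (F i) :=
  stmt18_general L L' a hA b hB rvec hr0 hray hrinj 𝔼 hE1 hE2 π hπ F hrad
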